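/- arXiv:2405.13288 — 7 statements merged into one kernel-verified Lean document; each statement's English description precedes it below -/
import Mathlib

section
/- Let K ≥ 3 be an integer and let φ : ℝ → [0,∞) satisfy: for all u₁ < u₂, φ(u₁) − φ(−u₁) − φ(u₂) + φ(−u₂) ≥ 0. Then for every probability vector p = (p_1,…,p_K), every a ∈ ℝ and every b ∈ ℝ^{K−1}, writing b↑ for the non-decreasing rearrangement of the components of b, one has Σ_{y=1}^{K} p_y · φ_AT(a, b↑, y) ≤ Σ_{y=1}^{K} p_y · φ_AT(a, b, y). (Pointwise form of Theorem 1 (a10): sorting the bias parameter vector never increases the conditional all-threshold surrogate risk.) -/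
/-- The all-threshold (AT) loss built from `φ`, for `K` classes.
Labels are represented 0-based by `y : Fin K` (label `y+1` in 1-based terms),
and bias indices 0-based by `k : Fin (K-1)` (bias `b_{k+1}` in 1-based terms), so that
`phiAT K φ a b y = Σ_{k=1}^{y-1} φ(a - b_k) + Σ_{k=y}^{K-1} φ(b_k - a)` in 1-based notation. -/
noncomputable def phiAT (K : ℕ) (φ : ℝ → ℝ) (a : ℝ) (b : Fin (K - 1) → ℝ) (y : Fin K) : ℝ :=
  ∑ k : Fin (K - 1), if (k : ℕ) < (y : ℕ) then φ (a - b k) else φ (b k - a)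

/-- Pointwise form of Theorem 1 (a10): sorting the bias parameter vector never increases
the conditional all-threshold surrogate risk. Here `b ∘ Tuple.sort b` is the
non-decreasing rearrangement of the components of `b`. -/
theorem stmt0 (K : ℕ) (hK : 3 ≤ K) (φ : ℝ → ℝ) (hφ0 : ∀ u, 0 ≤ φ u)
    (hφ : ∀ u₁ u₂ : ℝ, u₁ < u₂ → 0 ≤ φ u₁ - φ (-u₁) - φ u₂ + φ (-u₂))
    (p : Fin K → ℝ) (hp0 : ∀ y, 0 ≤ p y) (hp1 : ∑ y, p y = 1)
    (a : ℝ) (b : Fin (K - 1) → ℝ) :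
    ∑ y, p y * phiAT K φ a (b ∘ Tuple.sort b) y ≤ ∑ y, p y * phiAT K φ a b y := by
  classical
  set σ := Tuple.sort b with hσ
  set q : Fin (K - 1) → ℝ := fun k =>
    ∑ y ∈ Finset.univ.filter (fun y : Fin K => (k : ℕ) < (y : ℕ)), p y with hq
  set h : ℝ → ℝ := fun t => φ (a - t) - φ (t - a) with hh
  -- rewriting the risk
  have key : ∀ v : Fin (K - 1) → ℝ,
      ∑ y, p y * phiAT K φ a v y = ∑ k : Fin (K - 1), (q k * h (v k) + φ (v k - a)) := by
    intro v
    unfold phiAT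
    simp_rw [Finset.mul_sum]
    rw [Finset.sum_comm]
    refine Finset.sum_congr rfl fun k _ => ?_
    have : ∑ y : Fin K, p y * (if (k : ℕ) < (y : ℕ) then φ (a - v k) else φ (v k - a))
        = ∑ y ∈ Finset.univ.filter (fun y : Fin K => (k : ℕ) < (y : ℕ)), p y * φ (a - v k)
          + ∑ y ∈ Finset.univ.filter (fun y : Fin K => ¬ (k : ℕ) < (y : ℕ)),
              p y * φ (v k - a) := by
      simp_rw [mul_ite]
      exact Finset.sum_ite _ _
    rw [this, ← Finset.sum_mul, ← Finset.sum_mul]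
    have hsplit : (∑ y ∈ Finset.univ.filter (fun y : Fin K => (k : ℕ) < (y : ℕ)), p y)
        + (∑ y ∈ Finset.univ.filter (fun y : Fin K => ¬ (k : ℕ) < (y : ℕ)), p y) = 1 := by
      rw [Finset.sum_filter_add_sum_filter_not]; exact hp1
    have h2 : (∑ y ∈ Finset.univ.filter (fun y : Fin K => ¬ (k : ℕ) < (y : ℕ)), p y)
        = 1 - q k := by rw [hq]; linarith
    rw [h2, hq]
    simp only [hh]
    ring
  rw [key, key]
  -- the φ (v k - a) parts agree
  have hconst : ∑ k : Fin (K - 1), φ ((b ∘ σ) k - a) = ∑ k : Fin (K - 1), φ (b k - a) :=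
    Equiv.sum_comp σ (fun k => φ (b k - a))
  rw [Finset.sum_add_distrib, Finset.sum_add_distrib, hconst]
  refine add_le_add ?_ le_rfl
  -- antitone q
  have hqanti : Antitone q := by
    intro i j hij
    apply Finset.sum_le_sum_of_subset_of_nonneg
    · intro y hy
      simp only [Finset.mem_filter, Finset.mem_univ, true_and] at hy ⊢
      exact lt_of_le_of_lt (Nat.cast_le.mpr hij) hy |>.trans_le le_rfl
    · intro y _ _; exact hp0 y
  -- monotone h
  have hhmono : Monotone h := by
    intro t₁ t₂ ht
    rcases eq_or_lt_of_le ht with rfl | ht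
    · exact le_rfl
    · have := hφ (a - t₂) (a - t₁) (by linarith)
      simp only [neg_sub] at this
      simp only [hh]
      linarith [this]
  have hmono : Monotone (fun k => h ((b ∘ σ) k)) :=
    hhmono.comp (Tuple.monotone_sort b)
  have hav : Antivary q (fun k => h ((b ∘ σ) k)) := by
    intro i j hij
    by_contra hle
    push_neg at hle
    have : j < i := lt_of_not_ge fun hji => absurd (hqanti hji) (not_le.mpr hle)
    exact absurd (hmono this.le) (not_le.mpr hij)
  have := hav.sum_smul_le_sum_smul_comp_perm (σ := σ⁻¹)
  simp only [smul_eq_mul] at this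
  calc ∑ k : Fin (K - 1), q k * h ((b ∘ σ) k)
      ≤ ∑ k : Fin (K - 1), q k * h ((b ∘ σ) (σ⁻¹ k)) := this
    _ = ∑ k : Fin (K - 1), q k * h (b k) := by
        refine Finset.sum_congr rfl fun k _ => ?_
        simp [Function.comp]
end

section
/- Let K ≥ 3 be an integer and let φ : ℝ → [0,∞) satisfy: for all u₁ < u₂, φ(u₁) − φ(−u₁) − φ(u₂) + φ(−u₂) > 0. Let p = (p_1,…,p_K) be a probability vector with p_y > 0 for every y ∈ {1,…,K}, let a ∈ ℝ, and let b ∈ ℝ^{K−1} be not non-decreasing (i.e. b_l > b_m for some l < m). Then, writing b↑ for the non-decreasing rearrangement of the components of b, Σ_{y=1}^{K} p_y · φ_AT(a, b↑, y) < Σ_{y=1}^{K} p_y · φ_AT(a, b, y). (Pointwise form of Theorem 1 (a11): under the strict condition, any non-ordered bias vector is strictly suboptimal for the conditional all-threshold surrogate risk.) -/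
/-- Pointwise form of Theorem 1 (a11): under the strict condition on `φ`, if `p` has all
positive components and `b` is not non-decreasing, then the non-decreasing rearrangement
`b ∘ Tuple.sort b` of `b` gives a strictly smaller conditional all-threshold surrogate risk. -/
theorem stmt1 (K : ℕ) (hK : 3 ≤ K) (φ : ℝ → ℝ) (hφ0 : ∀ u, 0 ≤ φ u)
    (hφ : ∀ u₁ u₂ : ℝ, u₁ < u₂ → 0 < φ u₁ - φ (-u₁) - φ u₂ + φ (-u₂))
    (p : Fin K → ℝ) (hp0 : ∀ y, 0 < p y) (hp1 : ∑ y, p y = 1)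
    (a : ℝ) (b : Fin (K - 1) → ℝ)
    (hb : ∃ l m : Fin (K - 1), l < m ∧ b m < b l) :
    ∑ y, p y * phiAT K φ a (b ∘ Tuple.sort b) y < ∑ y, p y * phiAT K φ a b y := by
  obtain ⟨l, m, hlm, hbml⟩ := hb
  set σ := Tuple.sort b with hσdef
  set q : Fin (K - 1) → ℝ :=
    fun k => ∑ y ∈ Finset.univ.filter (fun y : Fin K => (k : ℕ) < (y : ℕ)), p y with hqdef
  set G : ℝ → ℝ := fun t => φ (a - t) - φ (t - a) with hGdef
  -- G is strictly increasing
  have hGmono : StrictMono G := by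
    intro s t hst
    have h := hφ (s - a) (t - a) (by linarith)
    have e1 : -(s - a) = a - s := by ring
    have e2 : -(t - a) = a - t := by ring
    rw [e1, e2] at h
    simp only [hGdef]
    linarith
  -- q is strictly antitone
  have hq : StrictAnti q := by
    intro i j hij
    simp only [hqdef]
    have hjK : (j : ℕ) < K := lt_of_lt_of_le j.isLt (Nat.sub_le K 1)
    refine Finset.sum_lt_sum_of_subset ?_ (i := (⟨(j : ℕ), hjK⟩ : Fin K)) ?_ ?_ ?_ ?_
    · intro y hy
      simp only [Finset.mem_filter, Finset.mem_univ, true_and] at hy ⊢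
      omega
    · simp only [Finset.mem_filter, Finset.mem_univ, true_and]
      exact hij
    · simp only [Finset.mem_filter, Finset.mem_univ, true_and]
      omega
    · exact hp0 _
    · intro y _ _
      exact le_of_lt (hp0 y)
  -- key decomposition of the risk
  have key : ∀ c : Fin (K - 1) → ℝ,
      ∑ y, p y * phiAT K φ a c y = ∑ k, (q k * G (c k) + φ (c k - a)) := by
    intro c
    unfold phiAT
    calc ∑ y, p y * ∑ k : Fin (K - 1), (if (k : ℕ) < (y : ℕ) then φ (a - c k) else φ (c k - a))
        = ∑ y, ∑ k : Fin (K - 1), p y * (if (k : ℕ) < (y : ℕ) then φ (a - c k) else φ (c k - a)) := by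
          simp [Finset.mul_sum]
      _ = ∑ k : Fin (K - 1), ∑ y, p y * (if (k : ℕ) < (y : ℕ) then φ (a - c k) else φ (c k - a)) :=
          Finset.sum_comm
      _ = ∑ k, (q k * G (c k) + φ (c k - a)) := by
          refine Finset.sum_congr rfl fun k _ => ?_
          have hsplit : ∑ y, p y * (if (k : ℕ) < (y : ℕ) then φ (a - c k) else φ (c k - a))
              = (∑ y ∈ Finset.univ.filter (fun y : Fin K => (k : ℕ) < (y : ℕ)), p y)
                  * φ (a - c k)
                + (∑ y ∈ Finset.univ.filter (fun y : Fin K => ¬ (k : ℕ) < (y : ℕ)), p y)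
                  * φ (c k - a) := by
            simp only [mul_ite]
            rw [Finset.sum_ite, Finset.sum_mul, Finset.sum_mul]
          have hcompl :
              (∑ y ∈ Finset.univ.filter (fun y : Fin K => ¬ (k : ℕ) < (y : ℕ)), p y)
                = 1 - q k := by
            have h := Finset.sum_filter_add_sum_filter_not Finset.univ
              (fun y : Fin K => (k : ℕ) < (y : ℕ)) p
            rw [hp1] at h
            simp only [hqdef]
            linarith
          rw [hsplit, hcompl]
          simp only [hGdef]
          ring
  rw [key, key]
  rw [Finset.sum_add_distrib, Finset.sum_add_distrib]
  have hconst : ∑ k, φ ((b ∘ σ) k - a) = ∑ k, φ (b k - a) :=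
    Equiv.sum_comp σ (fun k => φ (b k - a))
  rw [hconst]
  refine add_lt_add_left ?_ _
  -- the rearrangement part
  have hmono : Monotone (b ∘ σ) := Tuple.monotone_sort b
  have hAnti : Antivary q (fun k => G (b (σ k))) := by
    intro i j hij
    have hij' : i < j := by
      by_contra hc
      push_neg at hc
      exact absurd hij (not_lt.2 (hGmono.monotone (hmono hc)))
    exact hq.antitone (le_of_lt hij')
  have hnot : ¬ Antivary q ((fun k => G (b (σ k))) ∘ ⇑σ⁻¹) := by
    intro h
    have hG : ((fun k => G (b (σ k))) ∘ ⇑σ⁻¹) m < ((fun k => G (b (σ k))) ∘ ⇑σ⁻¹) l := by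
      simp only [Function.comp_apply, Equiv.Perm.coe_inv, Equiv.apply_symm_apply]
      exact hGmono hbml
    exact absurd (h hG) (not_le.2 (hq hlm))
  have hmain := (hAnti.sum_smul_lt_sum_smul_comp_perm_iff (σ := σ⁻¹)).2 hnot
  simp only [smul_eq_mul, Equiv.Perm.coe_inv, Equiv.apply_symm_apply] at hmain
  simpa using hmain
end

section
/- Let K ≥ 3, let b ∈ ℝ^{K−1} be ordered, let k ∈ {2,…,K−1}, and set μ := (b_{k−1} + b_k)/2. Then: (i) for every t ∈ ℝ, P_cl(k; μ + t, b) = P_cl(k; μ − t, b) (symmetry about μ); (ii) if in addition b_{k−1} < b_k, then u ↦ P_cl(k; u, b) is strictly increasing on (−∞, μ] and strictly decreasing on [μ, ∞), so it attains its maximum over u ∈ ℝ exactly at u = μ. (Theorem 3 (c3) and (c4).) -/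
open Finset

/-- The standard logistic sigmoid `σ(t) = 1/(1+e^{-t})`. -/
noncomputable def sigma (t : ℝ) : ℝ := 1 / (1 + Real.exp (-t))

/-- Cumulative probabilities of the cumulative logit (CL) model with `K` classes. -/
noncomputable def cumCL (K : ℕ) (u : ℝ) (b : ℕ → ℝ) (k : ℕ) : ℝ :=
  if k = 0 then 0 else if k < K then sigma (b k - u) else 1

/-- The cumulative logit (CL) model: `P_cl(y; u, b)` for labels `y ∈ {1, …, K}`,
with biases `b` indexed by `1, …, K-1`. -/
noncomputable def Pcl (K : ℕ) (u : ℝ) (b : ℕ → ℝ) (y : ℕ) : ℝ :=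
  cumCL K u b y - cumCL K u b (y - 1)

lemma sigma_exp (x : ℝ) : sigma x = Real.exp x / (1 + Real.exp x) := by
  unfold sigma
  rw [Real.exp_neg]
  have h1 : (0:ℝ) < Real.exp x := Real.exp_pos x
  field_simp
  ring

lemma sigma_neg (x : ℝ) : sigma (-x) = 1 - sigma x := by
  rw [sigma_exp, sigma_exp, Real.exp_neg]
  have h1 : (0:ℝ) < Real.exp x := Real.exp_pos x
  field_simp
  ring

lemma refl_lem (a c w : ℝ) :
    sigma (c - w) - sigma (a - w) = sigma (c - (a + c - w)) - sigma (a - (a + c - w)) := by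
  have h1 : c - (a + c - w) = -(a - w) := by ring
  have h2 : a - (a + c - w) = -(c - w) := by ring
  rw [h1, h2, sigma_neg, sigma_neg]; ring

lemma core (a c : ℝ) (hac : a < c) (u v : ℝ) (huv : u < v) (hv : v ≤ (a + c) / 2) :
    sigma (c - u) - sigma (a - u) < sigma (c - v) - sigma (a - v) := by
  have hcu : c - v = (c - u) + (u - v) := by ring
  have hav : a - v = (a - u) + (u - v) := by ring
  rw [sigma_exp, sigma_exp, sigma_exp, sigma_exp, hcu, hav, Real.exp_add, Real.exp_add]
  set X := Real.exp (c - u) with hX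
  set Y := Real.exp (a - u) with hY
  set r := Real.exp (u - v) with hr
  have hX0 : 0 < X := Real.exp_pos _
  have hY0 : 0 < Y := Real.exp_pos _
  have hr0 : 0 < r := Real.exp_pos _
  have hYX : Y < X := Real.exp_lt_exp.mpr (by linarith)
  have hr1 : r < 1 := by
    have : r < Real.exp 0 := Real.exp_lt_exp.mpr (by linarith)
    simpa using this
  have hXYr : 1 < X * Y * r := by
    have h : X * Y * r = Real.exp ((c - u) + (a - u) + (u - v)) := by
      rw [Real.exp_add, Real.exp_add]
    have h2 : Real.exp 0 < Real.exp ((c - u) + (a - u) + (u - v)) :=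
      Real.exp_lt_exp.mpr (by linarith)
    rw [h]
    simpa using h2
  have d1 : (0:ℝ) < 1 + X := by linarith
  have d2 : (0:ℝ) < 1 + Y := by linarith
  have d3 : (0:ℝ) < 1 + X * r := by positivity
  have d4 : (0:ℝ) < 1 + Y * r := by positivity
  rw [div_sub_div _ _ (ne_of_gt d1) (ne_of_gt d2), div_sub_div _ _ (ne_of_gt d3) (ne_of_gt d4),
    div_lt_div_iff₀ (by positivity) (by positivity)]
  nlinarith [mul_pos (mul_pos (show (0:ℝ) < X - Y by linarith)
      (show (0:ℝ) < 1 - r by linarith)) (show (0:ℝ) < X * Y * r - 1 by linarith)]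

/-- Theorem 3 (c3) and (c4): for an ordered bias vector `b` and `k ∈ {2,…,K-1}`,
with `μ = (b_{k-1} + b_k)/2`, the map `u ↦ P_cl(k;u,b)` is symmetric about `μ`; and if
moreover `b_{k-1} < b_k`, it is strictly increasing on `(-∞, μ]`, strictly decreasing on
`[μ, ∞)`, and attains its maximum over `u ∈ ℝ` exactly at `u = μ`. -/
theorem stmt4 (K : ℕ) (hK : 3 ≤ K) (b : ℕ → ℝ)
    (hbord : ∀ k, 1 ≤ k → k + 1 ≤ K - 1 → b k ≤ b (k + 1))
    (k : ℕ) (hk : k ∈ Finset.Icc 2 (K - 1)) :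
    (∀ t : ℝ,
      Pcl K ((b (k - 1) + b k) / 2 + t) b k = Pcl K ((b (k - 1) + b k) / 2 - t) b k) ∧
    (b (k - 1) < b k →
      StrictMonoOn (fun u : ℝ => Pcl K u b k) (Set.Iic ((b (k - 1) + b k) / 2)) ∧
      StrictAntiOn (fun u : ℝ => Pcl K u b k) (Set.Ici ((b (k - 1) + b k) / 2)) ∧
      ∀ u : ℝ, u ≠ (b (k - 1) + b k) / 2 →
        Pcl K u b k < Pcl K ((b (k - 1) + b k) / 2) b k) := by
  obtain ⟨hk2, hkK⟩ := Finset.mem_Icc.mp hk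
  have hkK' : k < K := by omega
  have hk1K : k - 1 < K := by omega
  have hform : ∀ u, Pcl K u b k = sigma (b k - u) - sigma (b (k - 1) - u) := by
    intro u
    unfold Pcl cumCL
    rw [if_neg (by omega : ¬ k = 0), if_pos hkK', if_neg (by omega : ¬ k - 1 = 0),
      if_pos hk1K]
  set a := b (k - 1) with ha
  set c := b k with hc
  constructor
  · intro t
    rw [hform, hform, refl_lem a c ((a + c) / 2 + t)]
    have h1 : a + c - ((a + c) / 2 + t) = (a + c) / 2 - t := by ring
    rw [h1]
  · intro hlt
    have hmono : StrictMonoOn (fun u : ℝ => Pcl K u b k) (Set.Iic ((a + c) / 2)) := by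
      intro u hu v hv huv
      simp only
      rw [hform, hform]
      exact core a c hlt u v huv (Set.mem_Iic.mp hv)
    have hanti : StrictAntiOn (fun u : ℝ => Pcl K u b k) (Set.Ici ((a + c) / 2)) := by
      intro u hu v hv huv
      simp only
      rw [hform, hform, refl_lem a c u, refl_lem a c v]
      exact core a c hlt (a + c - v) (a + c - u) (by linarith)
        (by have := Set.mem_Ici.mp hu; linarith)
    refine ⟨hmono, hanti, ?_⟩
    intro u hu
    rcases lt_or_gt_of_ne hu with h | h
    · exact hmono (Set.mem_Iic.mpr h.le) (Set.mem_Iic.mpr le_rfl) h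
    · exact hanti (Set.mem_Ici.mpr le_rfl) (Set.mem_Ici.mpr h.le) h
end

section
/- Let K ≥ 3, Δ > 0, and b = b^{[Δ]} := (0, Δ, 2Δ, …, (K−2)Δ) ∈ ℝ^{K−1}, i.e. b_k = (k−1)Δ. Let u ∈ ℝ and m ∈ {1,…,K} be such that b_{m−1} ≤ u < b_m, with the conventions b_0 := −∞ and b_K := +∞. Then: if m ≥ 2, P_cl(2; u, b) ≤ P_cl(3; u, b) ≤ … ≤ P_cl(m; u, b); and if m ≤ K−1, P_cl(m; u, b) ≥ P_cl(m+1; u, b) ≥ … ≥ P_cl(K−1; u, b). (Theorem 3 (c6).) -/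
open Finset

lemma sigma_nonneg (t : ℝ) : 0 ≤ sigma t := by
  unfold sigma; positivity

lemma sigma_le_one (t : ℝ) : sigma t ≤ 1 := by
  unfold sigma
  rw [div_le_one (by positivity)]
  have := Real.exp_pos (-t); linarith

lemma sigma_le_half (t : ℝ) (ht : t ≤ 0) : sigma t ≤ 1 / 2 := by
  unfold sigma
  have h : (1:ℝ) ≤ Real.exp (-t) := Real.one_le_exp (by linarith)
  rw [div_le_div_iff₀ (by positivity) (by norm_num)]
  linarith

lemma sigma_step (Δ x : ℝ) (hx : x ≤ 0) :
    sigma x - sigma (x - Δ) ≤ sigma (x + Δ) - sigma x := by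
  unfold sigma
  have hb : (1:ℝ) ≤ Real.exp (-x) := Real.one_le_exp (by linarith)
  have ha : Real.exp (-(x - Δ)) = Real.exp (-x) * Real.exp Δ := by
    rw [← Real.exp_add]; ring_nf
  have hc : Real.exp (-(x + Δ)) = Real.exp (-x) * Real.exp (-Δ) := by
    rw [← Real.exp_add]; ring_nf
  rw [ha, hc]
  have hEI : Real.exp Δ * Real.exp (-Δ) = 1 := by
    rw [← Real.exp_add]; simp
  set B := Real.exp (-x) with hB
  set E := Real.exp Δ with hE
  set I := Real.exp (-Δ) with hI
  have hEpos : 0 < E := Real.exp_pos _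
  have hIpos : 0 < I := Real.exp_pos _
  have hBpos : 0 < B := Real.exp_pos _
  have h1 : (0:ℝ) < 1 + B := by linarith
  have h2 : (0:ℝ) < 1 + B * E := by positivity
  have h3 : (0:ℝ) < 1 + B * I := by positivity
  rw [div_sub_div _ _ (ne_of_gt h1) (ne_of_gt h2), div_sub_div _ _ (ne_of_gt h3) (ne_of_gt h1),
    div_le_div_iff₀ (by positivity) (by positivity)]
  have key : (0:ℝ) ≤ (E - 1)^2 * (B - 1) * (B * (1 + B)) :=
    mul_nonneg (mul_nonneg (sq_nonneg _) (by linarith)) (by positivity)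
  have ident : E * ((1 * (1 + B) - (1 + B * I) * 1) * ((1 + B) * (1 + B * E))
      - (1 * (1 + B * E) - (1 + B) * 1) * ((1 + B * I) * (1 + B)))
      = (E - 1)^2 * (B - 1) * (B * (1 + B)) := by
    linear_combination (B^3 - B - 2*B^2*E - 2*B^3*E) * hEI
  nlinarith [mul_pos hEpos (mul_pos h1 h2)]

lemma sigma_step' (Δ x : ℝ) (hx : x ≤ 0) :
    sigma (-x + Δ) - sigma (-x) ≤ sigma (-x) - sigma (-x - Δ) := by
  have hneg : ∀ t : ℝ, sigma (-t) = 1 - sigma t := by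
    intro t
    unfold sigma
    have h1 : (0:ℝ) < 1 + Real.exp (-t) := by positivity
    have h2 : (0:ℝ) < 1 + Real.exp t := by positivity
    have hEI : Real.exp t * Real.exp (-t) = 1 := by rw [← Real.exp_add]; simp
    field_simp
    linear_combination -hEI
  have h1 : -x + Δ = -(x - Δ) := by ring
  have h2 : -x - Δ = -(x + Δ) := by ring
  rw [h1, h2, hneg, hneg, hneg]
  have := sigma_step Δ x hx
  linarith

lemma Pcl_eq (K : ℕ) (u : ℝ) (b : ℕ → ℝ) (y : ℕ) (h1 : 2 ≤ y) (h2 : y < K) :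
    Pcl K u b y = sigma (b y - u) - sigma (b (y - 1) - u) := by
  unfold Pcl cumCL
  have hy0 : y ≠ 0 := by omega
  have hy10 : y - 1 ≠ 0 := by omega
  have hy1K : y - 1 < K := by omega
  simp [hy0, hy10, h2, hy1K]

lemma Pcl_top (K : ℕ) (u : ℝ) (b : ℕ → ℝ) (h1 : 2 ≤ K) :
    Pcl K u b K = 1 - sigma (b (K - 1) - u) := by
  unfold Pcl cumCL
  have hK0 : K ≠ 0 := by omega
  have hK10 : K - 1 ≠ 0 := by omega
  have hK1K : K - 1 < K := by omega
  simp [hK0, hK10, hK1K, lt_irrefl]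

/-- Theorem 3 (c6): for the equal-interval bias vector `b_k = (k-1)Δ` with `Δ > 0`, if
`b_{m-1} ≤ u < b_m` (with conventions `b_0 = -∞`, `b_K = +∞`, expressed by guarding the
inequalities with `2 ≤ m` and `m ≤ K-1` respectively), then
`P_cl(2;u,b) ≤ … ≤ P_cl(m;u,b)` (if `m ≥ 2`) and
`P_cl(m;u,b) ≥ … ≥ P_cl(K-1;u,b)` (if `m ≤ K-1`). -/
theorem stmt6 (K : ℕ) (hK : 3 ≤ K) (Δ : ℝ) (hΔ : 0 < Δ)
    (b : ℕ → ℝ) (hb : ∀ k, b k = ((k : ℝ) - 1) * Δ)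
    (u : ℝ) (m : ℕ) (hm : m ∈ Finset.Icc 1 K)
    (hlo : 2 ≤ m → b (m - 1) ≤ u) (hhi : m ≤ K - 1 → u < b m) :
    (2 ≤ m → ∀ y ∈ Finset.Icc 2 (m - 1), Pcl K u b y ≤ Pcl K u b (y + 1)) ∧
    (m ≤ K - 1 → ∀ y ∈ Finset.Icc m (K - 2), Pcl K u b (y + 1) ≤ Pcl K u b y) := by
  rw [Finset.mem_Icc] at hm
  constructor
  · intro h2m y hy
    rw [Finset.mem_Icc] at hy
    obtain ⟨hy2, hym⟩ := hy
    have hym' : y + 1 ≤ m := by omega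
    -- u ≥ b (m-1) = (m-2) Δ
    have hu : ((m:ℝ) - 2) * Δ ≤ u := by
      have := hlo h2m
      rw [hb] at this
      rw [Nat.cast_sub (by omega : 1 ≤ m)] at this
      push_cast at this
      linarith
    have hu' : ((y:ℝ) - 1) * Δ ≤ u := by
      have hc : ((y:ℝ) - 1) ≤ (m:ℝ) - 2 := by
        have : (y:ℝ) + 1 ≤ (m:ℝ) := by exact_mod_cast hym'
        linarith
      nlinarith
    by_cases hyK : y + 1 < K
    · rw [Pcl_eq K u b y hy2 (by omega), Pcl_eq K u b (y + 1) (by omega) hyK]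
      have e1 : b (y + 1) - u = (((y:ℝ) - 1) * Δ - u) + Δ := by
        rw [hb]; push_cast; ring
      have e2 : b y - u = ((y:ℝ) - 1) * Δ - u := by rw [hb]
      have e3 : b (y - 1) - u = (((y:ℝ) - 1) * Δ - u) - Δ := by
        rw [hb, Nat.cast_sub (by omega : 1 ≤ y)]; push_cast; ring
      have e4 : b (y + 1 - 1) = b y := by norm_num
      rw [e4, e1, e2, e3]
      exact sigma_step Δ _ (by linarith)
    · -- y + 1 = K and m = K
      have hyK' : y + 1 = K := by omega
      have hmK : m = K := by omega
      rw [hyK', Pcl_top K u b (by omega), Pcl_eq K u b y hy2 (by omega)]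
      have e5 : K - 1 = y := by omega
      rw [e5]
      have hby : b y - u ≤ 0 := by
        rw [hb]
        have : ((y:ℝ) - 1) * Δ ≤ u := hu'
        linarith
      have h1 := sigma_le_half (b y - u) hby
      have h2 := sigma_nonneg (b (y - 1) - u)
      linarith
  · intro hmK y hy
    rw [Finset.mem_Icc] at hy
    obtain ⟨hym, hyK⟩ := hy
    have hy1K : y + 1 < K := by omega
    have hy1 : 1 ≤ y := by omega
    -- u < b m = (m-1) Δ ≤ (y-1) Δ
    have hu : u < ((y:ℝ) - 1) * Δ := by
      have h := hhi hmK
      rw [hb] at h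
      have hc : ((m:ℝ) - 1) ≤ (y:ℝ) - 1 := by
        have : (m:ℝ) ≤ (y:ℝ) := by exact_mod_cast hym
        linarith
      nlinarith
    by_cases hy2 : 2 ≤ y
    · rw [Pcl_eq K u b y hy2 (by omega), Pcl_eq K u b (y + 1) (by omega) hy1K]
      set x := u - ((y:ℝ) - 1) * Δ with hx
      have hx0 : x ≤ 0 := by rw [hx]; linarith
      have e1 : b (y + 1) - u = -x + Δ := by
        rw [hb]; push_cast; ring
      have e2 : b y - u = -x := by rw [hb]; ring
      have e3 : b (y - 1) - u = -x - Δ := by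
        rw [hb, Nat.cast_sub (by omega : 1 ≤ y)]; push_cast; ring
      have e4 : b (y + 1 - 1) = b y := by norm_num
      rw [e4, e1, e2, e3]
      exact sigma_step' Δ x hx0
    · -- y = 1 (and m = 1)
      have hy1' : y = 1 := by omega
      subst hy1'
      have hP1 : Pcl K u b 1 = sigma (b 1 - u) := by
        unfold Pcl cumCL
        simp [show (1:ℕ) < K by omega]
      rw [hP1, Pcl_eq K u b 2 (le_refl _) (by omega)]
      have e2 : b 2 - u = -(u - 0 * Δ) + Δ := by rw [hb]; push_cast; ring
      have e1 : b 1 - u = -(u - 0 * Δ) := by rw [hb]; push_cast; ring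
      have e0 : b (2 - 1) = b 1 := by norm_num
      rw [e0, e2, e1]
      have hx0 : u - 0 * Δ ≤ 0 := by
        have : u < (1 - (1:ℝ)) * Δ := by exact_mod_cast hu
        simpa using by linarith
      have h := sigma_step' Δ (u - 0 * Δ) hx0
      have h2 := sigma_nonneg (-(u - 0 * Δ) - Δ)
      linarith
end

section
/- Let K ≥ 3 and consider the data model (ν, p). With F_y(x) := Σ_{l=1}^{y} p(x)_l and F̄_y := ∫ F_y(x) dν(x), define ã(x) := 1 + (2/(K−1)) Σ_{y=1}^{K−1} (F̄_y − F̄_1) − (2/(K−1)) Σ_{y=1}^{K−1} F_y(x), the constant c₂ := 1 − 2F̄_1 + (2/(K−1)) (Σ_{y=1}^{K−1} F̄_y − K), the thresholds t̄_k := c₂ + (2/(K−1))(k + 1/2) for k ∈ {1,…,K−1}, and the classifier f̄(x) := 1 + #{k ∈ {1,…,K−1} : ã(x) ≥ t̄_k} (the threshold labeling h_thr(ã(x); t̄)). Then for every measurable f : ℝ^d → {1,…,K}, ∫ Σ_{y=1}^{K} p(x)_y (f(x) − y)² dν(x) ≥ ∫ Σ_{y=1}^{K} p(x)_y (f̄(x)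 − y)² dν(x); i.e. f̄ attains the minimal squared-loss task risk over all classifiers. (Bayes-optimality part of Theorem 4 for ℓ = ℓ_sq.) -/
open Finset MeasureTheory

set_option maxHeartbeats 2000000 in
/-- Bayes-optimality part of Theorem 4 for `ℓ = ℓ_sq`: with
`F_y(x) = Σ_{l=1}^{y} p(x)_l`, `F̄_y = ∫ F_y dν`,
`ã(x) = 1 + (2/(K-1)) Σ_{y=1}^{K-1} (F̄_y - F̄_1) - (2/(K-1)) Σ_{y=1}^{K-1} F_y(x)`,
`c₂ = 1 - 2F̄_1 + (2/(K-1))(Σ_{y=1}^{K-1} F̄_y - K)`,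
thresholds `t̄_k = c₂ + (2/(K-1))(k + 1/2)` and the threshold classifier
`f̄(x) = 1 + #{k ∈ {1,…,K-1} : ã(x) ≥ t̄_k}`, the classifier `f̄` attains the minimal
squared-loss task risk over all measurable classifiers `f : ℝ^d → {1,…,K}`. -/
theorem stmt9 (K d : ℕ) (hK : 3 ≤ K)
    (ν : Measure (Fin d → ℝ)) [IsProbabilityMeasure ν]
    (p : (Fin d → ℝ) → ℕ → ℝ)
    (hpm : ∀ y, Measurable fun x => p x y)
    (hp0 : ∀ x y, 0 ≤ p x y)
    (hp1 : ∀ x, ∑ y ∈ Finset.Icc 1 K, p x y = 1)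
    (F : (Fin d → ℝ) → ℕ → ℝ) (hF : ∀ x y, F x y = ∑ l ∈ Finset.Icc 1 y, p x l)
    (Fbar : ℕ → ℝ) (hFbar : ∀ y, Fbar y = ∫ x, F x y ∂ν)
    (ta : (Fin d → ℝ) → ℝ)
    (hta : ∀ x, ta x = 1 + (2 / ((K : ℝ) - 1)) * (∑ y ∈ Finset.Icc 1 (K - 1), (Fbar y - Fbar 1))
        - (2 / ((K : ℝ) - 1)) * ∑ y ∈ Finset.Icc 1 (K - 1), F x y)
    (c2 : ℝ)
    (hc2 : c2 = 1 - 2 * Fbar 1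
        + (2 / ((K : ℝ) - 1)) * ((∑ y ∈ Finset.Icc 1 (K - 1), Fbar y) - (K : ℝ)))
    (tbar : ℕ → ℝ) (htbar : ∀ k, tbar k = c2 + (2 / ((K : ℝ) - 1)) * ((k : ℝ) + 1 / 2))
    (fbar : (Fin d → ℝ) → ℕ)
    (hfbar : ∀ x, fbar x = 1 + ((Finset.Icc 1 (K - 1)).filter fun k => tbar k ≤ ta x).card) :
    ∀ f : (Fin d → ℝ) → ℕ, Measurable f → (∀ x, f x ∈ Finset.Icc 1 K) →
      (∫⁻ x, ENNReal.ofReal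
          (∑ y ∈ Finset.Icc 1 K, p x y * ((fbar x : ℝ) - (y : ℝ)) ^ 2) ∂ν)
        ≤ ∫⁻ x, ENNReal.ofReal
            (∑ y ∈ Finset.Icc 1 K, p x y * ((f x : ℝ) - (y : ℝ)) ^ 2) ∂ν := by
  intro f hf hfmem
  have hK1 : 1 ≤ K := by omega
  have hKR : (1:ℝ) ≤ (K:ℝ) - 1 := by
    have : (3:ℝ) ≤ (K:ℝ) := by exact_mod_cast hK
    linarith
  have hKne : ((K:ℝ) - 1) ≠ 0 := by linarith
  have hcpos : (0:ℝ) < 2 / ((K:ℝ) - 1) := by positivity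
  apply lintegral_mono
  intro x
  apply ENNReal.ofReal_le_ofReal
  set μ : ℝ := ∑ y ∈ Finset.Icc 1 K, (y:ℝ) * p x y with hμdef
  set S : ℝ := ∑ y ∈ Finset.Icc 1 (K-1), F x y with hSdef
  clear_value μ S
  -- swap the double sum
  have hswap : S = ∑ l ∈ Finset.Icc 1 (K-1), ∑ y ∈ Finset.Icc l (K-1), p x l := by
    rw [hSdef]
    simp only [hF]
    exact Finset.sum_comm' (by
      intro a b
      simp only [Finset.mem_Icc]
      omega)
  have hS2 : S = ∑ l ∈ Finset.Icc 1 (K-1), ((K:ℝ) - l) * p x l := by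
    rw [hswap]
    apply Finset.sum_congr rfl
    intro l hl
    obtain ⟨hl1, hl2⟩ := Finset.mem_Icc.mp hl
    rw [Finset.sum_const, Nat.card_Icc, nsmul_eq_mul]
    have hcard : (K - 1 + 1 - l : ℕ) = K - l := by omega
    rw [hcard, Nat.cast_sub (by omega)]
  have htop : ∀ (g : ℕ → ℝ), ∑ l ∈ Finset.Icc 1 K, g l
      = (∑ l ∈ Finset.Icc 1 (K-1), g l) + g K := by
    intro g
    have hkk : K - 1 + 1 = K := by omega
    rw [← hkk, Finset.sum_Icc_succ_top (by omega), Nat.add_sub_cancel]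
  -- μ = K - S
  have hμS : (K:ℝ) - S = μ := by
    have e1 : μ = (∑ l ∈ Finset.Icc 1 (K-1), (l:ℝ) * p x l) + (K:ℝ) * p x K := by
      rw [hμdef, htop]
    have e2 : (∑ l ∈ Finset.Icc 1 (K-1), p x l) + p x K = 1 := by
      rw [← htop]; exact hp1 x
    have e3 : S + (∑ l ∈ Finset.Icc 1 (K-1), (l:ℝ) * p x l)
        = (K:ℝ) * ∑ l ∈ Finset.Icc 1 (K-1), p x l := by
      rw [hS2, ← Finset.sum_add_distrib, Finset.mul_sum]
      apply Finset.sum_congr rfl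
      intro l hl
      ring
    have e4 : (K:ℝ) * ((∑ l ∈ Finset.Icc 1 (K-1), p x l) + p x K) = (K:ℝ) * 1 := by
      rw [e2]
    rw [mul_add, mul_one] at e4
    linarith [e1, e3, e4]
  -- bounds on μ
  have hμ1 : 1 ≤ μ := by
    rw [← hp1 x, hμdef]
    apply Finset.sum_le_sum
    intro y hy
    have h1y : 1 ≤ y := (Finset.mem_Icc.mp hy).1
    have h1r : (1:ℝ) ≤ (y:ℝ) := by exact_mod_cast h1y
    nlinarith [hp0 x y]
  have hμK : μ ≤ K := by
    have : μ ≤ ∑ y ∈ Finset.Icc 1 K, (K:ℝ) * p x y := by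
      rw [hμdef]
      apply Finset.sum_le_sum
      intro y hy
      have h1y : y ≤ K := (Finset.mem_Icc.mp hy).2
      have h1r : (y:ℝ) ≤ (K:ℝ) := by exact_mod_cast h1y
      nlinarith [hp0 x y]
    rw [← Finset.mul_sum, hp1 x, mul_one] at this
    exact this
  -- the threshold condition in terms of μ
  have hsum1 : ∑ y ∈ Finset.Icc 1 (K-1), (Fbar y - Fbar 1)
      = (∑ y ∈ Finset.Icc 1 (K-1), Fbar y) - ((K:ℝ) - 1) * Fbar 1 := by
    rw [Finset.sum_sub_distrib, Finset.sum_const, Nat.card_Icc, nsmul_eq_mul]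
    have hcard : (K - 1 + 1 - 1 : ℕ) = K - 1 := by omega
    rw [hcard, Nat.cast_sub hK1]
    push_cast
    ring
  have hfilter : ∀ k : ℕ, (tbar k ≤ ta x ↔ (k:ℝ) + 1/2 ≤ μ) := by
    intro k
    have keyeq : ta x - tbar k = (2/((K:ℝ)-1)) * (μ - ((k:ℝ) + 1/2)) := by
      have hc2' : (2/((K:ℝ)-1)) * ((K:ℝ)-1) = 2 := by field_simp
      rw [hta, htbar, hc2, hsum1, ← hSdef, ← hμS]
      linear_combination (-(Fbar 1)) * hc2'
    constructor
    · intro h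
      have h2 : 0 ≤ (2/((K:ℝ)-1)) * (μ - ((k:ℝ) + 1/2)) := by
        rw [← keyeq]; linarith
      nlinarith [h2, hcpos]
    · intro h
      have h2 : 0 ≤ (2/((K:ℝ)-1)) * (μ - ((k:ℝ) + 1/2)) :=
        mul_nonneg (le_of_lt hcpos) (by linarith)
      linarith [keyeq ▸ h2]
  set N : ℕ := ((Finset.Icc 1 (K-1)).filter fun k : ℕ => (k:ℝ) + 1/2 ≤ μ).card with hNdef
  clear_value N
  have hfeq : fbar x = 1 + N := by
    have heq : (Finset.Icc 1 (K-1)).filter (fun k => tbar k ≤ ta x)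
        = (Finset.Icc 1 (K-1)).filter (fun k : ℕ => (k:ℝ) + 1/2 ≤ μ) :=
      Finset.filter_congr (fun k _ => by simpa using hfilter k)
    rw [hfbar, heq, hNdef]
  -- bounds on m = 1 + N
  have hA : ((1 + N : ℕ):ℝ) - μ ≤ 1/2 := by
    rcases Nat.eq_zero_or_pos N with h0 | hpos
    · rw [h0]
      norm_num
      linarith
    · have hne : ((Finset.Icc 1 (K-1)).filter fun k : ℕ => (k:ℝ) + 1/2 ≤ μ).Nonempty :=
        Finset.card_pos.mp (hNdef ▸ hpos)
      set k0 := Finset.max' _ hne with hk0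
      have hk0mem := Finset.max'_mem _ hne
      obtain ⟨hk0Icc, hk0le⟩ := Finset.mem_filter.mp hk0mem
      have hsub : ((Finset.Icc 1 (K-1)).filter fun k : ℕ => (k:ℝ) + 1/2 ≤ μ)
          ⊆ Finset.Icc 1 k0 := by
        intro j hj
        obtain ⟨hjIcc, _⟩ := Finset.mem_filter.mp hj
        exact Finset.mem_Icc.mpr ⟨(Finset.mem_Icc.mp hjIcc).1, Finset.le_max' _ j hj⟩
      have hNk0 : N ≤ k0 := by
        have h5 := Finset.card_le_card hsub
        rw [Nat.card_Icc, Nat.add_sub_cancel] at h5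
        rw [hNdef]
        exact h5
      have : (N:ℝ) ≤ (k0:ℝ) := by exact_mod_cast hNk0
      push_cast
      linarith
  have hNleK : N ≤ K - 1 := by
    have h6 := Finset.card_filter_le (Finset.Icc 1 (K-1)) (fun k : ℕ => (k:ℝ) + 1/2 ≤ μ)
    rw [Nat.card_Icc, Nat.add_sub_cancel] at h6
    rw [hNdef]
    exact h6
  have hB : μ - ((1 + N : ℕ):ℝ) ≤ 1/2 := by
    rcases eq_or_lt_of_le hNleK with heq | hlt
    · have : (1 + N : ℕ) = K := by omega
      rw [this]
      linarith
    · have hnot : ¬ ((N + 1 : ℕ):ℝ) + 1/2 ≤ μ := by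
        intro hle
        have hmem : (N + 1) ∈ (Finset.Icc 1 (K-1)).filter fun k : ℕ => (k:ℝ) + 1/2 ≤ μ :=
          Finset.mem_filter.mpr ⟨Finset.mem_Icc.mpr ⟨by omega, by omega⟩, hle⟩
        have hsub : Finset.Icc 1 (N+1) ⊆
            (Finset.Icc 1 (K-1)).filter fun k : ℕ => (k:ℝ) + 1/2 ≤ μ := by
          intro j hj
          obtain ⟨hj1, hj2⟩ := Finset.mem_Icc.mp hj
          refine Finset.mem_filter.mpr ⟨Finset.mem_Icc.mpr ⟨hj1, by omega⟩, ?_⟩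
          have : (j:ℝ) ≤ ((N+1:ℕ):ℝ) := by exact_mod_cast hj2
          linarith
        have := Finset.card_le_card hsub
        rw [Nat.card_Icc, Nat.add_sub_cancel] at this
        omega
      push_cast at hnot ⊢
      linarith
  -- quadratic expansion
  have hexp : ∀ a : ℝ, ∑ y ∈ Finset.Icc 1 K, p x y * (a - (y:ℝ))^2
      = (a - μ)^2 + ((∑ y ∈ Finset.Icc 1 K, p x y * (y:ℝ)^2) - μ^2) := by
    intro a
    have h1 := hp1 x
    have hstep : ∑ y ∈ Finset.Icc 1 K, p x y * (a - (y:ℝ))^2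
        = a^2 * (∑ y ∈ Finset.Icc 1 K, p x y) - 2*a*μ
          + ∑ y ∈ Finset.Icc 1 K, p x y * (y:ℝ)^2 := by
      rw [hμdef, Finset.mul_sum, Finset.mul_sum, ← Finset.sum_sub_distrib,
        ← Finset.sum_add_distrib]
      apply Finset.sum_congr rfl
      intro y hy
      ring
    rw [hstep, h1]
    ring
  rw [hfeq, hexp, hexp]
  have hkey : (((1 + N : ℕ):ℝ) - μ)^2 ≤ (((f x : ℕ):ℝ) - μ)^2 := by
    obtain ⟨hf1, hf2⟩ := Finset.mem_Icc.mp (hfmem x)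
    rcases (by omega : f x = 1 + N ∨ f x + 1 ≤ 1 + N ∨ 1 + N + 1 ≤ f x) with h | h | h
    · rw [h]
    · have h7 : ((f x : ℕ):ℝ) + 1 ≤ ((1 + N : ℕ):ℝ) := by exact_mod_cast h
      push_cast at h7 hA hB ⊢
      nlinarith [hA, hB, h7]
    · have h7 : ((1 + N : ℕ):ℝ) + 1 ≤ ((f x : ℕ):ℝ) := by exact_mod_cast h
      push_cast at h7 hA hB ⊢
      nlinarith [hA, hB, h7]
  linarith
end

section
/- Let K ≥ 3, let b ∈ ℝ^{K−1} be non-decreasing (b_1 ≤ … ≤ b_{K−1}), and let u ∈ ℝ. Then for every k ∈ {1,…,K−1}: if b_k ≤ u then P_acl(k; u, b) ≤ P_acl(k+1; u, b), and if b_k ≥ u then P_acl(k; u, b) ≥ P_acl(k+1; u, b). Consequently, if m ∈ {1,…,K} satisfies b_{m−1} ≤ u ≤ b_m (with the conventions b_0 := −∞ and b_K := +∞), then P_acl(1;u,b) ≤ … ≤ P_acl(m;u,b) and P_acl(m;u,b) ≥ … ≥ P_acl(K;u,b); in particular the probability vector (P_acl(y;u,b))_{y=1}^{K} is unimodal. (Theorem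 6 (g2).) -/
open Finset

/-- The adjacent categories logit (ACL) model:
`P_acl(y; u, b) = exp(-Σ_{k=1}^{y-1}(b_k - u)) / Σ_{l=1}^{K} exp(-Σ_{k=1}^{l-1}(b_k - u))`
for labels `y ∈ {1,…,K}`, with biases `b` indexed by `1,…,K-1` (empty sums are 0). -/
noncomputable def Pacl (K : ℕ) (u : ℝ) (b : ℕ → ℝ) (y : ℕ) : ℝ :=
  Real.exp (-(∑ k ∈ Finset.Icc 1 (y - 1), (b k - u))) /
    ∑ l ∈ Finset.Icc 1 K, Real.exp (-(∑ k ∈ Finset.Icc 1 (l - 1), (b k - u)))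

/-- A vector `(q_1,…,q_K)` is unimodal if for every index `m` at which `q` attains its
maximum over `{1,…,K}`, `q` is non-decreasing on `{1,…,m}` and non-increasing on
`{m,…,K}`. -/
def Unimodal (K : ℕ) (q : ℕ → ℝ) : Prop :=
  ∀ m ∈ Finset.Icc 1 K, (∀ y ∈ Finset.Icc 1 K, q y ≤ q m) →
    (∀ y ∈ Finset.Icc 1 (m - 1), q y ≤ q (y + 1)) ∧
    (∀ y ∈ Finset.Icc m (K - 1), q (y + 1) ≤ q y)

lemma Pacl_pos (K : ℕ) (hK : 1 ≤ K) (u : ℝ) (b : ℕ → ℝ) (y : ℕ) : 0 < Pacl K u b y := by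
  apply div_pos (Real.exp_pos _)
  exact Finset.sum_pos (fun i _ => Real.exp_pos _) ⟨1, by simp [hK]⟩

lemma Pacl_succ (K : ℕ) (u : ℝ) (b : ℕ → ℝ) (k : ℕ) (hk : 1 ≤ k) :
    Pacl K u b (k + 1) = Pacl K u b k * Real.exp (u - b k) := by
  obtain ⟨j, rfl⟩ : ∃ j, k = j + 1 := ⟨k - 1, by omega⟩
  unfold Pacl
  have h1 : j + 1 + 1 - 1 = j + 1 := by omega
  have h2 : j + 1 - 1 = j := by omega
  rw [h1, h2, Finset.sum_Icc_succ_top (by omega : 1 ≤ j + 1)]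
  rw [neg_add, Real.exp_add, show -(b (j+1) - u) = u - b (j+1) from by ring]
  ring

/-- Theorem 6 (g2): for a non-decreasing bias vector `b`, adjacent ACL probabilities
compare according to the sign of `b_k - u`; consequently, if `b_{m-1} ≤ u ≤ b_m`
(conventions `b_0 = -∞`, `b_K = +∞`) the ACL probabilities increase up to `m` and
decrease after `m`, and in particular `(P_acl(y;u,b))_y` is unimodal. -/
theorem stmt11 (K : ℕ) (hK : 3 ≤ K) (b : ℕ → ℝ)
    (hbord : ∀ k, 1 ≤ k → k + 1 ≤ K - 1 → b k ≤ b (k + 1)) (u : ℝ) :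
    (∀ k ∈ Finset.Icc 1 (K - 1),
      (b k ≤ u → Pacl K u b k ≤ Pacl K u b (k + 1)) ∧
      (u ≤ b k → Pacl K u b (k + 1) ≤ Pacl K u b k)) ∧
    (∀ m ∈ Finset.Icc 1 K, (2 ≤ m → b (m - 1) ≤ u) → (m ≤ K - 1 → u ≤ b m) →
      (∀ y ∈ Finset.Icc 1 (m - 1), Pacl K u b y ≤ Pacl K u b (y + 1)) ∧
      (∀ y ∈ Finset.Icc m (K - 1), Pacl K u b (y + 1) ≤ Pacl K u b y)) ∧
    Unimodal K (fun y => Pacl K u b y) := by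
  have hK1 : 1 ≤ K := by omega
  have hbmono : ∀ i j, 1 ≤ i → i ≤ j → j ≤ K - 1 → b i ≤ b j := by
    intro i j
    induction j with
    | zero => intro h1 h2 _; exact absurd (h1.trans h2) (by omega)
    | succ n ih =>
      intro h1 h2 h3
      rcases eq_or_lt_of_le h2 with heq | hlt
      · exact heq ▸ le_refl _
      · exact (ih h1 (by omega) (by omega)).trans (hbord n (by omega) h3)
  have hstep_le : ∀ k, 1 ≤ k → b k ≤ u → Pacl K u b k ≤ Pacl K u b (k + 1) := by
    intro k hk h
    rw [Pacl_succ K u b k hk]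
    have he : (1 : ℝ) ≤ Real.exp (u - b k) := by
      rw [← Real.exp_zero]; exact Real.exp_le_exp.mpr (by linarith)
    nlinarith [Pacl_pos K hK1 u b k]
  have hstep_ge : ∀ k, 1 ≤ k → u ≤ b k → Pacl K u b (k + 1) ≤ Pacl K u b k := by
    intro k hk h
    rw [Pacl_succ K u b k hk]
    have he : Real.exp (u - b k) ≤ 1 := by
      rw [← Real.exp_zero]; exact Real.exp_le_exp.mpr (by linarith)
    nlinarith [Pacl_pos K hK1 u b k]
  have chain_dec : ∀ y, 1 ≤ y → u ≤ b y → ∀ i, y ≤ i → ∀ j, i ≤ j → j ≤ K →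
      Pacl K u b j ≤ Pacl K u b i := by
    intro y hy hu i hi j
    induction j with
    | zero => intro h1 h2; exact absurd ((hy.trans hi).trans h1) (by omega)
    | succ n ih =>
      intro h1 h2
      rcases eq_or_lt_of_le h1 with heq | hlt
      · exact heq ▸ le_refl _
      · have hin : i ≤ n := by omega
        have hbn : u ≤ b n := hu.trans (hbmono y n hy (by omega) (by omega))
        exact (hstep_ge n (by omega) hbn).trans (ih hin (by omega))
  have chain_inc : ∀ y, y ≤ K - 1 → b y ≤ u → ∀ i, 1 ≤ i → ∀ j, i ≤ j → j ≤ y →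
      Pacl K u b i ≤ Pacl K u b j := by
    intro y hyK hu i hi j
    induction j with
    | zero => intro h1 h2; exact absurd (hi.trans h1) (by omega)
    | succ n ih =>
      intro h1 h2
      rcases eq_or_lt_of_le h1 with heq | hlt
      · exact heq ▸ le_refl _
      · have hin : i ≤ n := by omega
        have hbn : b n ≤ u := (hbmono n y (by omega) (by omega) hyK).trans hu
        exact (ih hin (by omega)).trans (hstep_le n (by omega) hbn)
  refine ⟨?_, ?_, ?_⟩
  · intro k hk
    rw [Finset.mem_Icc] at hk
    exact ⟨hstep_le k hk.1, hstep_ge k hk.1⟩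
  · intro m hm h1 h2
    rw [Finset.mem_Icc] at hm
    constructor
    · intro y hy
      rw [Finset.mem_Icc] at hy
      have hm2 : 2 ≤ m := by omega
      have hby : b y ≤ u := (hbmono y (m - 1) hy.1 hy.2 (by omega)).trans (h1 hm2)
      exact hstep_le y hy.1 hby
    · intro y hy
      rw [Finset.mem_Icc] at hy
      have hmK : m ≤ K - 1 := by omega
      have hby : u ≤ b y := (h2 hmK).trans (hbmono m y (by omega) hy.1 hy.2)
      exact hstep_ge y (by omega) hby
  · intro m hm hmax
    rw [Finset.mem_Icc] at hm
    constructor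
    · intro y hy
      rw [Finset.mem_Icc] at hy
      rcases le_total (b y) u with h | h
      · exact hstep_le y hy.1 h
      · have ha : Pacl K u b y ≤ Pacl K u b m := hmax y (by rw [Finset.mem_Icc]; omega)
        have hb2 : Pacl K u b m ≤ Pacl K u b (y + 1) :=
          chain_dec y hy.1 h (y + 1) (by omega) m (by omega) hm.2
        exact ha.trans hb2
    · intro y hy
      rw [Finset.mem_Icc] at hy
      rcases le_total u (b y) with h | h
      · exact hstep_ge y (by omega) h
      · have ha : Pacl K u b (y + 1) ≤ Pacl K u b m := hmax (y + 1) (by rw [Finset.mem_Icc]; omega)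
        have hb2 : Pacl K u b m ≤ Pacl K u b y :=
          chain_inc y hy.2 h m (by omega) y hy.1 le_rfl
        exact ha.trans hb2
end

section
/- Let K ≥ 3, let ã ∈ ℝ, and let b̃ ∈ ℝ^{K−1} with b̃_1 = 0 (no ordering assumed). Define the conditional surrogate risk R(a,b) := Σ_{y=1}^{K} P_acl(y; ã, b̃) · φ_IT(a, b, y) with φ(u) = e^{−u} (Exponential-IT loss). Then for every a ∈ ℝ and every b ∈ ℝ^{K−1} with b_1 = 0, R(a, b) ≥ R(ã/2, b̃/2), with equality if and only if a = ã/2 and b = b̃/2. (Conditional-risk form of Theorem 5 (f1) for the Exponential-IT loss.) -/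
open Finset

/-- The immediate-threshold (IT) loss built from `φ`:
`φ_IT(a,b,1) = φ(b_1 - a)`, `φ_IT(a,b,K) = φ(a - b_{K-1})`, and
`φ_IT(a,b,y) = φ(a - b_{y-1}) + φ(b y - a)` for `1 < y < K`. -/
noncomputable def phiIT (K : ℕ) (φ : ℝ → ℝ) (a : ℝ) (b : ℕ → ℝ) (y : ℕ) : ℝ :=
  if y = 1 then φ (b 1 - a)
  else if y = K then φ (a - b (K - 1))
  else φ (a - b (y - 1)) + φ (b y - a)

lemma cosh_ge (t : ℝ) : 2 ≤ Real.exp t + Real.exp (-t) ∧ (Real.exp t + Real.exp (-t) = 2 ↔ t = 0) := by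
  have h1 : Real.exp (t/2) * Real.exp (-(t/2)) = 1 := by
    rw [← Real.exp_add]; ring_nf; exact Real.exp_zero
  have h2 : Real.exp (t/2) * Real.exp (t/2) = Real.exp t := by
    rw [← Real.exp_add]; ring_nf
  have h3 : Real.exp (-(t/2)) * Real.exp (-(t/2)) = Real.exp (-t) := by
    rw [← Real.exp_add]; ring_nf
  constructor
  · nlinarith [sq_nonneg (Real.exp (t/2) - Real.exp (-(t/2)))]
  · constructor
    · intro h
      have heq : Real.exp (t/2) = Real.exp (-(t/2)) := by
        nlinarith [sq_nonneg (Real.exp (t/2) - Real.exp (-(t/2)))]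
      have := Real.exp_injective heq
      linarith
    · rintro rfl; simp; norm_num

lemma key (p q c c' : ℝ) (hp : 0 < p) (hq : 0 < q)
    (hbal : p * Real.exp (-c') = q * Real.exp c') :
    p * Real.exp (-c') + q * Real.exp c' ≤ p * Real.exp (-c) + q * Real.exp c ∧
    (p * Real.exp (-c) + q * Real.exp c = p * Real.exp (-c') + q * Real.exp c' ↔ c = c') := by
  set m := q * Real.exp c' with hm
  have hm0 : 0 < m := by positivity
  have e1 : p * Real.exp (-c) = m * Real.exp (-(c - c')) := by
    rw [← hbal, mul_assoc, ← Real.exp_add]; ring_nf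
  have e2 : q * Real.exp c = m * Real.exp (c - c') := by
    rw [hm, mul_assoc, ← Real.exp_add]; ring_nf
  have e3 : p * Real.exp (-c') + q * Real.exp c' = m * 2 := by rw [← hbal] at hm ⊢; linarith
  obtain ⟨hc1, hc2⟩ := cosh_ge (c - c')
  rw [e1, e2, e3]
  refine ⟨by nlinarith, ?_⟩
  rw [show m * Real.exp (-(c - c')) + m * Real.exp (c - c') =
      m * (Real.exp (c - c') + Real.exp (-(c - c'))) by ring,
    mul_right_inj' hm0.ne', hc2, sub_eq_zero]

lemma reindex (A B : ℕ → ℝ) (K : ℕ) (hK : 2 ≤ K) :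
    (∑ y ∈ Finset.Icc 1 K,
      (if y = 1 then A 1 else if y = K then B (K - 1) else B (y - 1) + A y))
    = ∑ k ∈ Finset.Icc 1 (K - 1), (A k + B k) := by
  induction K, hK using Nat.le_induction with
  | base =>
    norm_num [show Finset.Icc 1 2 = {1, 2} by rfl, show Finset.Icc 1 1 = {1} by rfl]
  | succ K hK ih =>
    obtain ⟨m, rfl⟩ : ∃ m, K = m + 1 := ⟨K - 1, by omega⟩
    simp only [show m + 1 + 1 - 1 = m + 1 from rfl, show m + 1 - 1 = m from rfl] at ih ⊢
    rw [Finset.sum_Icc_succ_top (by omega : 1 ≤ m + 1 + 1),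
      Finset.sum_Icc_succ_top (by omega : 1 ≤ m + 1),
      Finset.sum_Icc_succ_top (by omega : 1 ≤ m + 1)]
    rw [Finset.sum_Icc_succ_top (by omega : 1 ≤ m + 1)] at ih
    have c1 : ∑ y ∈ Finset.Icc 1 m,
        (if y = 1 then A 1 else if y = m + 1 + 1 then B (m + 1) else B (y - 1) + A y)
        = ∑ y ∈ Finset.Icc 1 m,
        (if y = 1 then A 1 else if y = m + 1 then B m else B (y - 1) + A y) := by
      refine Finset.sum_congr rfl fun y hy => ?_
      simp only [Finset.mem_Icc] at hy
      by_cases h1 : y = 1 <;> simp [h1, show y ≠ m + 1 + 1 by omega, show y ≠ m + 1 by omega]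
    simp only [show m + 1 + 1 ≠ 1 by omega, show m + 1 ≠ 1 by omega,
      if_false, if_true, show (m + 1 : ℕ) ≠ m + 1 + 1 by omega] at *
    simp only [show m + 1 + 1 - 1 = m + 1 from rfl, show m + 1 - 1 = m from rfl] at *
    linarith [c1]

/-- Conditional-risk form of Theorem 5 (f1) for the Exponential-IT loss: if the
conditional distribution follows the ACL model with parameters `(ã, b̃)` where
`b̃_1 = 0` (no ordering assumed), then the conditional Exponential-IT surrogate risk is
uniquely minimized over all `a ∈ ℝ` and `b` with `b_1 = 0` at `(ã/2, b̃/2)`. -/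
theorem stmt15 (K : ℕ) (hK : 3 ≤ K) (ta : ℝ) (tb : ℕ → ℝ) (htb1 : tb 1 = 0) :
    ∀ (a : ℝ) (b : ℕ → ℝ), b 1 = 0 →
      (∑ y ∈ Finset.Icc 1 K, Pacl K ta tb y *
          phiIT K (fun u => Real.exp (-u)) a b y)
        ≥ (∑ y ∈ Finset.Icc 1 K, Pacl K ta tb y *
            phiIT K (fun u => Real.exp (-u)) (ta / 2) (fun k => tb k / 2) y) ∧
      ((∑ y ∈ Finset.Icc 1 K, Pacl K ta tb y *
            phiIT K (fun u => Real.exp (-u)) a b y)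
          = (∑ y ∈ Finset.Icc 1 K, Pacl K ta tb y *
              phiIT K (fun u => Real.exp (-u)) (ta / 2) (fun k => tb k / 2) y)
        ↔ (a = ta / 2 ∧ ∀ k ∈ Finset.Icc 1 (K - 1), b k = tb k / 2)) := by
  intro a b hb1
  set P : ℕ → ℝ := Pacl K ta tb with hP
  have hZ : 0 < ∑ l ∈ Finset.Icc 1 K, Real.exp (-(∑ k ∈ Finset.Icc 1 (l - 1), (tb k - ta))) :=
    Finset.sum_pos (fun l _ => Real.exp_pos _) (Finset.nonempty_Icc.mpr (by omega))
  have hPpos : ∀ y, 0 < P y := fun y => div_pos (Real.exp_pos _) hZ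
  have hstep : ∀ k : ℕ, 1 ≤ k →
      (∑ j ∈ Finset.Icc 1 k, (tb j - ta)) =
      (∑ j ∈ Finset.Icc 1 (k - 1), (tb j - ta)) + (tb k - ta) := by
    intro k hk
    obtain ⟨m, rfl⟩ : ∃ m, k = m + 1 := ⟨k - 1, by omega⟩
    rw [Finset.sum_Icc_succ_top (by omega : 1 ≤ m + 1)]
    simp
  have hbal : ∀ k : ℕ, 1 ≤ k →
      P k * Real.exp (-(tb k / 2 - ta / 2)) = P (k + 1) * Real.exp (tb k / 2 - ta / 2) := by
    intro k hk
    rw [hP]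
    unfold Pacl
    rw [div_mul_eq_mul_div, div_mul_eq_mul_div, ← Real.exp_add, ← Real.exp_add]
    congr 2
    rw [show k + 1 - 1 = k from rfl, hstep k hk]
    ring
  have hrisk : ∀ (a' : ℝ) (b' : ℕ → ℝ),
      (∑ y ∈ Finset.Icc 1 K, P y * phiIT K (fun u => Real.exp (-u)) a' b' y)
      = ∑ k ∈ Finset.Icc 1 (K - 1),
          (P k * Real.exp (-(b' k - a')) + P (k + 1) * Real.exp (b' k - a')) := by
    intro a' b'
    rw [← reindex (fun k => P k * Real.exp (-(b' k - a')))
        (fun k => P (k + 1) * Real.exp (b' k - a')) K (by omega)]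
    refine Finset.sum_congr rfl fun y hy => ?_
    simp only [Finset.mem_Icc] at hy
    unfold phiIT
    by_cases h1 : y = 1
    · simp [h1]
    · by_cases h2 : y = K
      · simp only [h1, h2, show K ≠ 1 by omega, if_false, if_true, ite_false]
        rw [show K - 1 + 1 = K by omega]
        rw [show a' - b' (K - 1) = -(b' (K - 1) - a') by ring]
        rw [neg_neg]
      · simp only [h1, h2, if_false]
        rw [show y - 1 + 1 = y by omega]
        rw [show a' - b' (y - 1) = -(b' (y - 1) - a') by ring, neg_neg]
        ring
  rw [hrisk a b, hrisk (ta / 2) (fun k => tb k / 2)]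
  have hterm : ∀ k ∈ Finset.Icc 1 (K - 1),
      (P k * Real.exp (-(tb k / 2 - ta / 2)) + P (k + 1) * Real.exp (tb k / 2 - ta / 2))
        ≤ (P k * Real.exp (-(b k - a)) + P (k + 1) * Real.exp (b k - a)) ∧
      ((P k * Real.exp (-(b k - a)) + P (k + 1) * Real.exp (b k - a))
        = (P k * Real.exp (-(tb k / 2 - ta / 2)) + P (k + 1) * Real.exp (tb k / 2 - ta / 2))
        ↔ b k - a = tb k / 2 - ta / 2) := by
    intro k hk
    simp only [Finset.mem_Icc] at hk
    exact key (P k) (P (k + 1)) (b k - a) (tb k / 2 - ta / 2) (hPpos k) (hPpos (k + 1))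
      (hbal k hk.1)
  constructor
  · exact Finset.sum_le_sum (fun k hk => (hterm k hk).1)
  · rw [eq_comm, Finset.sum_eq_sum_iff_of_le (fun k hk => (hterm k hk).1)]
    constructor
    · intro h
      have h' : ∀ k ∈ Finset.Icc 1 (K - 1), b k - a = tb k / 2 - ta / 2 := by
        intro k hk
        exact ((hterm k hk).2).mp ((h k hk).symm)
      have h1 : (1 : ℕ) ∈ Finset.Icc 1 (K - 1) := by
        simp only [Finset.mem_Icc]; omega
      have ha : a = ta / 2 := by
        have := h' 1 h1
        rw [hb1, htb1] at this
        linarith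
      refine ⟨ha, fun k hk => ?_⟩
      have := h' k hk
      linarith
    · rintro ⟨rfl, hb⟩
      intro k hk
      exact (((hterm k hk).2).mpr (by rw [hb k hk])).symm
end
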